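/- arXiv:2209.07074 — 4 statements merged into one kernel-verified Lean document; each statement's English description precedes it below -/
import Mathlib

section
/- Let X be a real-valued random variable and f a function such that P(X ≥ x) ≤ exp(-m·f(x)) for all x, where m ≥ 1. Then E[exp((m-1)·f(X))] ≤ m. -/
/-!
Since `f` need not be monotone, the tail bound on `X` is first transferred to `f ∘ X`: by
inner regularity of the law of `X`, it suffices to bound the mass of compact
`K ⊆ {x | s ≤ f x}`, and such `K` lies in `Ici (min K)`, so `P(s ≤ f X) ≤ exp (-m s)`.
Then `Z = exp ((m - 1) f X)` satisfies `P(t ≤ Z) ≤ t ^ (-p)` with `p = m / (m - 1)`, and the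
layer-cake formula gives
`E[Z] ≤ 1 + ∫_1^∞ t ^ (-p) dt = 1 + (m - 1) = m`.
-/
open MeasureTheory Real Set
open scoped ENNReal

theorem measure_le_of_forall_measure_Ici_le {α : Type*} [LinearOrder α] [TopologicalSpace α]
    [ClosedIicTopology α] [MeasurableSpace α] (ν : Measure α) [ν.InnerRegular]
    {S : Set α} (hS : MeasurableSet S) {B : ℝ≥0∞} (h : ∀ x ∈ S, ν (Ici x) ≤ B) : ν S ≤ B := by
  rw [hS.measure_eq_iSup_isCompact]
  refine iSup₂_le fun K hKS => iSup_le fun hK => ?_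
  rcases K.eq_empty_or_nonempty with rfl | hne
  · simp
  obtain ⟨x, hxK, hx⟩ := hK.exists_isLeast hne
  exact (measure_mono hx).trans (h x (hKS hxK))

theorem measure_le_comp_le_of_tail_le {Ω : Type*} [MeasurableSpace Ω] (μ : Measure Ω)
    [IsFiniteMeasure μ] {X : Ω → ℝ} (hX : Measurable X) {f : ℝ → ℝ} (hf : Measurable f)
    {g : ℝ → ℝ≥0∞} (hg : Antitone g)
    (htail : ∀ x, μ {ω | x ≤ X ω} ≤ g (f x)) (s : ℝ) : μ {ω | s ≤ f (X ω)} ≤ g s := by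
  have hS : MeasurableSet (f ⁻¹' Ici s) := hf measurableSet_Ici
  have := measure_le_of_forall_measure_Ici_le (μ.map X) hS (B := g s) fun x hx => by
    rw [Measure.map_apply hX measurableSet_Ici]
    exact (htail x).trans (hg hx)
  rwa [Measure.map_apply hX hS] at this

theorem lintegral_Ioi_one_rpow_neg {p : ℝ} (hp : 1 < p) :
    ∫⁻ t in Ioi (1 : ℝ), ENNReal.ofReal (t ^ (-p)) = ENNReal.ofReal (1 / (p - 1)) := by
  rw [← ofReal_integral_eq_lintegral_ofReal (integrableOn_Ioi_rpow_of_lt (by linarith) zero_lt_one)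
    ((ae_restrict_iff' measurableSet_Ioi).2
      (.of_forall fun t ht => rpow_nonneg (zero_le_one.trans ht.le) _)),
    integral_Ioi_rpow_of_lt (by linarith) zero_lt_one, one_rpow]
  rw [show -p + 1 = -(p - 1) by ring, neg_div_neg_eq]

theorem lintegral_le_of_tail_le_rpow {Ω : Type*} [MeasurableSpace Ω] (μ : Measure Ω)
    [IsProbabilityMeasure μ]
    {Z : Ω → ℝ} (hZ0 : 0 ≤ᵐ[μ] Z) (hZ : AEMeasurable Z μ) {p : ℝ} (hp : 1 < p)
    (htail : ∀ t, 1 < t → μ {ω | t ≤ Z ω} ≤ ENNReal.ofReal (t ^ (-p))) :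
    ∫⁻ ω, ENNReal.ofReal (Z ω) ∂μ ≤ ENNReal.ofReal (p / (p - 1)) := by
  rw [lintegral_eq_lintegral_meas_le μ hZ0 hZ, ← Ioc_union_Ioi_eq_Ioi zero_le_one,
    lintegral_union measurableSet_Ioi (Ioc_disjoint_Ioi le_rfl)]
  calc _ ≤ (∫⁻ _ in Ioc (0 : ℝ) 1, 1) + ∫⁻ t in Ioi (1 : ℝ), ENNReal.ofReal (t ^ (-p)) :=
        add_le_add (lintegral_mono fun _ => prob_le_one)
          (setLIntegral_mono' measurableSet_Ioi htail)
    _ = ENNReal.ofReal (1 + 1 / (p - 1)) := by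
        rw [lintegral_Ioi_one_rpow_neg hp, setLIntegral_one, Real.volume_Ioc, sub_zero,
          ENNReal.ofReal_add zero_le_one (one_div_nonneg.2 (by linarith))]
    _ = ENNReal.ofReal (p / (p - 1)) := by
        congr 1
        have : p - 1 ≠ 0 := by linarith
        field_simp
        ring

/-- McAllester's lemma: if `P(X ≥ x) ≤ exp (-m * f x)` for all `x` with `m ≥ 1`,
then `E[exp ((m-1) * f X)] ≤ m`. -/
theorem stmt_0 {Ω : Type*} [MeasurableSpace Ω] (μ : Measure Ω) [IsProbabilityMeasure μ]
    (X : Ω → ℝ) (hX : Measurable X) (f : ℝ → ℝ) (hf : Measurable f)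
    (m : ℝ) (hm : 1 ≤ m)
    (htail : ∀ x : ℝ, μ {ω | x ≤ X ω} ≤ ENNReal.ofReal (Real.exp (-(m * f x)))) :
    ∫ ω, Real.exp ((m - 1) * f (X ω)) ∂μ ≤ m := by
  rcases hm.eq_or_lt with rfl | hm1
  · simp
  have hm0 : 0 < m - 1 := sub_pos.2 hm1
  have htail_fX := measure_le_comp_le_of_tail_le μ hX hf
    (g := fun s => ENNReal.ofReal (exp (-(m * s))))
    (fun _ _ hst => ENNReal.ofReal_le_ofReal (exp_le_exp.2 (by nlinarith))) htail
  have htail_exp : ∀ t, 1 < t →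
      μ {ω | t ≤ exp ((m - 1) * f (X ω))} ≤ ENNReal.ofReal (t ^ (-(m / (m - 1)))) := by
    intro t ht
    have hset : {ω | t ≤ exp ((m - 1) * f (X ω))} = {ω | log t / (m - 1) ≤ f (X ω)} := by
      ext ω
      rw [mem_ofPred_eq, mem_ofPred_eq, ← log_le_iff_le_exp (by linarith), div_le_iff₀' hm0]
    rw [hset, rpow_def_of_pos (by linarith)]
    convert htail_fX (log t / (m - 1)) using 3
    ring
  have hZ0 : 0 ≤ᵐ[μ] fun ω => exp ((m - 1) * f (X ω)) := .of_forall fun _ => (exp_pos _).le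
  have hZ : Measurable fun ω => exp ((m - 1) * f (X ω)) := by fun_prop
  have hp : 1 < m / (m - 1) := (one_lt_div hm0).2 (by linarith)
  rw [integral_eq_lintegral_of_nonneg_ae hZ0 hZ.aestronglyMeasurable]
  refine ENNReal.toReal_le_of_le_ofReal (by linarith) ?_
  convert lintegral_le_of_tail_le_rpow μ hZ0 hZ.aemeasurable hp htail_exp using 2
  field_simp
  ring
end

section
/- Under the setup of the empirical-maximization overestimation theorem, if equality E_B[Ĵ_B(π_B)] = E_B[J(π_B)] holds, then for μ-almost every pair of datasets B, B', the empirical maximizer on B also maximizes the empirical objective on B', i.e., Ĵ_{B'}(π_B) = max_{π ∈ H} Ĵ_{B'}(π). -/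
/-!
`Ĵ_{B'}(π_{B'}) - Ĵ_{B'}(π_B)` is nonnegative since `π_{B'}` maximizes `Ĵ_{B'}`. By unbiasedness its
expectation over independent `B, B'` is `E[Ĵ_B(π_B)] - E[J(π_B)]`, which vanishes in the equality
case, so the gap is zero almost surely.
-/

open MeasureTheory

theorem ae_forall_le_of_integral_eq_maximizer {α H : Type*} [MeasurableSpace α] {ν : Measure α}
    {F : α → H → ℝ} {σ τ : α → H} (hτ : ∀ a π, F a π ≤ F a (τ a))
    (hσ_int : Integrable (fun a => F a (σ a)) ν) (hτ_int : Integrable (fun a => F a (τ a)) ν)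
    (heq : ∫ a, F a (σ a) ∂ν = ∫ a, F a (τ a) ∂ν) :
    ∀ᵐ a ∂ν, ∀ π, F a π ≤ F a (σ a) := by
  have hσ_eq_τ := (integral_eq_iff_of_ae_le hσ_int hτ_int (.of_forall fun a => hτ a (σ a))).mp heq
  filter_upwards [hσ_eq_τ] with a ha π
  exact (hτ a π).trans_eq ha.symm

theorem stmt_4_general {D : Type*} [MeasurableSpace D] (μ : Measure D) [IsProbabilityMeasure μ]
    {H : Type*} (Jhat : D → H → ℝ) (J : H → ℝ) (πB : D → H)
    (hmax : ∀ B : D, ∀ π : H, Jhat B π ≤ Jhat B (πB B))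
    (hunbiased : ∫ B, J (πB B) ∂μ = ∫ B, ∫ B', Jhat B' (πB B) ∂μ ∂μ)
    (hint1 : Integrable (fun B => Jhat B (πB B)) μ)
    (hint3 : Integrable (fun p : D × D => Jhat p.2 (πB p.1)) (μ.prod μ))
    (heq : ∫ B, Jhat B (πB B) ∂μ = ∫ B, J (πB B) ∂μ) :
    ∀ᵐ p : D × D ∂(μ.prod μ), ∀ π : H, Jhat p.2 π ≤ Jhat p.2 (πB p.1) := by
  refine ae_forall_le_of_integral_eq_maximizer (F := fun (p : D × D) π => Jhat p.2 π)
    (τ := fun p => πB p.2) (fun p => hmax p.2) hint3 (hint1.comp_snd μ) ?_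
  calc ∫ p, Jhat p.2 (πB p.1) ∂(μ.prod μ) = ∫ B, ∫ B', Jhat B' (πB B) ∂μ ∂μ :=
        integral_prod _ hint3
    _ = ∫ B, Jhat B (πB B) ∂μ := by rw [← hunbiased, heq]
    _ = ∫ p, Jhat p.2 (πB p.2) ∂(μ.prod μ) := by
        simp [integral_fun_snd (μ := μ) fun B => Jhat B (πB B)]

/-- Equality case of the overestimation theorem: under the same setup, if
`E_B[Ĵ B (πB B)] = E_B[J (πB B)]` then for almost every pair of datasets
`(B, B')`, the empirical maximizer on `B` also maximizes the empirical
objective on `B'`. -/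
theorem stmt_4 {D : Type*} [MeasurableSpace D] (μ : Measure D) [IsProbabilityMeasure μ]
    {H : Type*} (Jhat : D → H → ℝ) (J : H → ℝ) (πB : D → H)
    (hmax : ∀ B : D, ∀ π : H, Jhat B π ≤ Jhat B (πB B))
    (hunbiased : ∫ B, J (πB B) ∂μ = ∫ B, ∫ B', Jhat B' (πB B) ∂μ ∂μ)
    (hint1 : Integrable (fun B => Jhat B (πB B)) μ)
    (hint2 : Integrable (fun B => J (πB B)) μ)
    (hint3 : Integrable (fun p : D × D => Jhat p.2 (πB p.1)) (μ.prod μ))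
    (heq : ∫ B, Jhat B (πB B) ∂μ = ∫ B, J (πB B) ∂μ) :
    ∀ᵐ p : D × D ∂(μ.prod μ), ∀ π : H, Jhat p.2 π ≤ Jhat p.2 (πB p.1) :=
  stmt_4_general μ Jhat J πB hmax hunbiased hint1 hint3 heq
end

section
/- For every n ≥ 1, M ≥ 1, and ε > 0, there exist positive integers M₁, M₂ such that, letting p = M₂/(M₁+M₂), one has 1 - p^{n+1} ≤ ε and (1 - p^n)·(M₁+M₂)/n ≥ M. -/
/-! Take `M₂ = a x` and `M₁ = x`, so that `p = a / (a + 1)` whatever `x` is. By Bernoulli's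
inequality `1 - p ^ (n + 1) ≤ (n + 1) / (a + 1)`, which is at most `ε` once `a` is large; with
`a` fixed, `1 - p ^ n > 0`, so the estimate `(1 - p ^ n) (a + 1) x / n` grows linearly in `x`. -/

theorem one_sub_pow_one_sub_le {t : ℝ} (ht : t ≤ 2) (k : ℕ) :
    1 - (1 - t) ^ k ≤ k * t := by
  have := one_add_mul_le_pow (show (-2 : ℝ) ≤ -t by linarith) k
  rw [← sub_eq_add_neg] at this
  linarith

theorem exists_nat_one_sub_pow_div_succ_le (k : ℕ) {ε : ℝ} (hε : 0 < ε) :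
    ∃ a : ℕ, 0 < a ∧ 1 - ((a : ℝ) / (a + 1)) ^ k ≤ ε := by
  obtain ⟨a, ha⟩ := exists_nat_gt ((k : ℝ) / ε)
  refine ⟨a, Nat.cast_pos.1 ((div_nonneg k.cast_nonneg hε.le).trans_lt ha), ?_⟩
  have ha₁ : (0 : ℝ) < a + 1 := by positivity
  have hp : (a : ℝ) / (a + 1) = 1 - 1 / (a + 1) := by field_simp; ring
  calc 1 - ((a : ℝ) / (a + 1)) ^ k ≤ k * (1 / (a + 1)) := by
        rw [hp]
        exact one_sub_pow_one_sub_le ((div_le_one_of_le₀ (by linarith) ha₁.le).trans one_le_two) k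
    _ = k / (a + 1) := mul_one_div _ _
    _ ≤ ε := by
        rw [div_le_iff₀ ha₁]
        rw [div_lt_iff₀ hε] at ha
        linarith

theorem natCast_mul_div_add_natCast_mul (a : ℕ) {x : ℕ} (hx : 0 < x) :
    ((a * x : ℕ) : ℝ) / ((x : ℝ) + (a * x : ℕ)) = a / (a + 1) := by
  have : (x : ℝ) ≠ 0 := by positivity
  push_cast
  rw [show (x : ℝ) + a * x = (a + 1) * x by ring, mul_div_mul_right _ _ this]

theorem stmt_7_general (n : ℕ) (hn : 1 ≤ n) (M : ℝ) (ε : ℝ) (hε : 0 < ε) :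
    ∃ M₁ M₂ : ℕ, 0 < M₁ ∧ 0 < M₂ ∧
      (1 - ((M₂ : ℝ) / (M₁ + M₂)) ^ (n + 1) ≤ ε ∧
       (1 - ((M₂ : ℝ) / (M₁ + M₂)) ^ n) * ((M₁ : ℝ) + M₂) / n ≥ M) := by
  obtain ⟨a, ha, hεa⟩ := exists_nat_one_sub_pow_div_succ_le (n + 1) hε
  set p : ℝ := a / (a + 1)
  have hp : p ^ n < 1 :=
    pow_lt_one₀ (by positivity) ((div_lt_one (by positivity)).2 (by linarith)) (by omega)
  have hc : 0 < (a + 1) * (1 - p ^ n) / n := by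
    have : (0 : ℝ) < n := by exact_mod_cast hn
    have : 0 < 1 - p ^ n := by linarith
    positivity
  obtain ⟨x, hx⟩ := exists_nat_gt (max (M / ((a + 1) * (1 - p ^ n) / n)) 0)
  have hx₀ : 0 < x := by exact_mod_cast (le_max_right _ _).trans_lt hx
  refine ⟨x, a * x, hx₀, Nat.mul_pos ha hx₀, ?_⟩
  rw [natCast_mul_div_add_natCast_mul a hx₀]
  refine ⟨hεa, ?_⟩
  have hM := (div_lt_iff₀ hc).1 ((le_max_left _ _).trans_lt hx)
  calc M ≤ x * ((a + 1) * (1 - p ^ n) / n) := hM.le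
    _ = (1 - p ^ n) * ((x : ℝ) + (a * x : ℕ)) / n := by push_cast; ring

/-- Arithmetic core of the arbitrarily-severe Reuse Bias construction: for every
`n ≥ 1`, `M ≥ 1` and `ε > 0` there are positive integers `M₁, M₂` such that, with
`p = M₂ / (M₁ + M₂)`, we have `1 - p ^ (n+1) ≤ ε` and
`(1 - p ^ n) * (M₁ + M₂) / n ≥ M`. -/
theorem stmt_7 (n : ℕ) (hn : 1 ≤ n) (M : ℝ) (hM : 1 ≤ M) (ε : ℝ) (hε : 0 < ε) :
    ∃ M₁ M₂ : ℕ, 0 < M₁ ∧ 0 < M₂ ∧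
      (1 - ((M₂ : ℝ) / (M₁ + M₂)) ^ (n + 1) ≤ ε ∧
       (1 - ((M₂ : ℝ) / (M₁ + M₂)) ^ n) * ((M₁ : ℝ) + M₂) / n ≥ M) :=
  stmt_7_general n hn M ε hε
end

section
/- Let X₁,...,X_m and Y₁,...,Y_m be independent random variables, with each Xᵢ, Yᵢ ∈ [0,1], and set Δ = (1/m)Σᵢ(Xᵢ − Yᵢ). If S_X = (1/m)ΣᵢXᵢ − E[X₁] and S_Y = E[Y₁] − (1/m)ΣᵢYᵢ (all Xᵢ i.i.d., all Yᵢ i.i.d., E[X₁]=E[Y₁]), then E[exp((m−1)Δ²)] ≤ E[exp(2(m−1)S_X²)]·E[exp(2(m−1)S_Y²)] ≤ m², using (a+b)² ≤ 2a² + 2b² and Hoeffding tail bounds with the McAllester lemma. -/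
open MeasureTheory ProbabilityTheory Real
open scoped ENNReal NNReal

/-!
Write `Δ = S_X + S_Y`. As `S_X` and `S_Y` are independent and `(a + b)² ≤ 2a² + 2b²`,
`E[exp((m-1)Δ²)]` is at most the product of the two moments `E[exp(2(m-1)S²)]`.
By Hoeffding's lemma each deviation `S` of a sample mean of `[0,1]`-valued variables is
sub-Gaussian with variance proxy `c = 1/(4m)`, and linearizing the square with a Gaussian shows
that a sub-Gaussian `S` satisfies `E[exp(tS²)] ≤ (1 - 2ct)^(-1/2)`. For `t = 2(m-1)` each moment
is at most `√m`, so the product is at most `m ≤ m²`.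
-/

/-- For `β ≥ 1 / 2` both sides are junk values equal to `0`. -/
lemma integral_exp_mul_sq_gaussianReal (β : ℝ) :
    ∫ y, exp (β * y ^ 2) ∂gaussianReal 0 1 = (√(1 - 2 * β))⁻¹ := by
  rw [integral_gaussianReal_eq_integral_smul one_ne_zero]
  simp only [gaussianPDFReal_def, smul_eq_mul, NNReal.coe_one, mul_one, sub_zero, mul_assoc,
    ← exp_add]
  have hexp : ∀ y : ℝ, -y ^ 2 / 2 + β * y ^ 2 = -(1 / 2 - β) * y ^ 2 := fun y => by ring
  simp only [hexp, integral_const_mul, integral_gaussian]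
  rw [← sqrt_inv, ← sqrt_mul (by positivity), ← sqrt_inv]
  congr 1
  field_simp

lemma integrable_exp_mul_sq_gaussianReal {β : ℝ} (hβ : β < 1 / 2) :
    Integrable (fun y => exp (β * y ^ 2)) (gaussianReal 0 1) :=
  Integrable.of_integral_ne_zero <| by
    rw [integral_exp_mul_sq_gaussianReal]
    exact (inv_pos.2 (sqrt_pos.2 (by linarith))).ne'

lemma exp_mul_sq_eq_integral_gaussianReal {t : ℝ} (ht : 0 ≤ t) (x : ℝ) :
    exp (t * x ^ 2) = ∫ y, exp (√(2 * t) * x * y) ∂gaussianReal 0 1 := by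
  have h := congrFun (mgf_fun_id_gaussianReal (μ := 0) (v := 1)) (√(2 * t) * x)
  rw [mgf] at h
  rw [h, mul_pow, sq_sqrt (by linarith)]
  congr 1
  push_cast
  ring

namespace ProbabilityTheory.HasSubgaussianMGF

variable {Ω : Type*} [MeasurableSpace Ω] {μ : Measure Ω} {X : Ω → ℝ} {c : ℝ≥0} {t : ℝ}

/-- `exp (t x²)` is the moment generating function of a standard Gaussian `G` at `√(2t) x`, so by
Tonelli `E[exp (t X²)] = E_G[mgf X (√(2t) G)] ≤ E_G[exp (c t G²)]`. -/
lemma lintegral_exp_mul_sq_le (hX : HasSubgaussianMGF X c μ) (ht : 0 ≤ t) (hct : 2 * c * t < 1) :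
    ∫⁻ ω, ENNReal.ofReal (exp (t * X ω ^ 2)) ∂μ ≤ ENNReal.ofReal (√(1 - 2 * c * t))⁻¹ := by
  have : IsFiniteMeasure μ := by simpa [integrable_const_iff] using hX.integrable_exp_mul 0
  have hpos : ∀ x, 0 ≤ exp x := fun x => (exp_pos x).le
  set a := √(2 * t)
  calc ∫⁻ ω, ENNReal.ofReal (exp (t * X ω ^ 2)) ∂μ
      = ∫⁻ ω, ∫⁻ y, ENNReal.ofReal (exp (a * y * X ω)) ∂gaussianReal 0 1 ∂μ := by
        refine lintegral_congr fun ω => ?_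
        rw [exp_mul_sq_eq_integral_gaussianReal ht, ofReal_integral_eq_lintegral_ofReal
          (integrable_exp_mul_gaussianReal _) (ae_of_all _ fun _ => hpos _)]
        simp only [a, mul_right_comm]
    _ = ∫⁻ y, ∫⁻ ω, ENNReal.ofReal (exp (a * y * X ω)) ∂μ ∂gaussianReal 0 1 :=
        lintegral_lintegral_swap (by have := hX.aemeasurable; fun_prop)
    _ ≤ ∫⁻ y, ENNReal.ofReal (exp (c * t * y ^ 2)) ∂gaussianReal 0 1 := by
        gcongr with y
        rw [← ofReal_integral_eq_lintegral_ofReal (hX.integrable_exp_mul _)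
          (ae_of_all _ fun _ => hpos _)]
        refine ENNReal.ofReal_le_ofReal ((hX.mgf_le _).trans_eq ?_)
        rw [mul_pow, sq_sqrt (by linarith)]
        ring_nf
    _ = ENNReal.ofReal (√(1 - 2 * c * t))⁻¹ := by
        rw [← ofReal_integral_eq_lintegral_ofReal (integrable_exp_mul_sq_gaussianReal (by linarith))
          (ae_of_all _ fun _ => hpos _), integral_exp_mul_sq_gaussianReal]
        ring_nf

lemma integrable_exp_mul_sq (hX : HasSubgaussianMGF X c μ) (ht : 0 ≤ t) (hct : 2 * c * t < 1) :
    Integrable (fun ω => exp (t * X ω ^ 2)) μ := by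
  refine ⟨by have := hX.aemeasurable; fun_prop, ?_⟩
  rw [hasFiniteIntegral_iff_ofReal (ae_of_all _ fun _ => (exp_pos _).le)]
  exact (hX.lintegral_exp_mul_sq_le ht hct).trans_lt ENNReal.ofReal_lt_top

lemma integral_exp_mul_sq_le (hX : HasSubgaussianMGF X c μ) (ht : 0 ≤ t) (hct : 2 * c * t < 1) :
    ∫ ω, exp (t * X ω ^ 2) ∂μ ≤ (√(1 - 2 * c * t))⁻¹ := by
  rw [integral_eq_lintegral_of_nonneg_ae (ae_of_all _ fun _ => (exp_pos _).le)
    (by have := hX.aemeasurable; fun_prop)]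
  exact ENNReal.toReal_le_of_le_ofReal (by positivity) (hX.lintegral_exp_mul_sq_le ht hct)

end ProbabilityTheory.HasSubgaussianMGF

section SampleMean

variable {Ω : Type*} [MeasurableSpace Ω] {μ : Measure Ω}

lemma ProbabilityTheory.iIndepFun.indepFun_sumElim {ι κ β : Type*} [Fintype ι] [Fintype κ]
    [MeasurableSpace β] {X : ι → Ω → β} {Y : κ → Ω → β} (h : iIndepFun (Sum.elim X Y) μ)
    (hX : ∀ i, AEMeasurable (X i) μ) (hY : ∀ j, AEMeasurable (Y j) μ) :
    IndepFun (fun ω i => X i ω) (fun ω j => Y j ω) μ := by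
  classical
  let S : Finset (ι ⊕ κ) := Finset.univ.map Function.Embedding.inl
  let T : Finset (ι ⊕ κ) := Finset.univ.map Function.Embedding.inr
  have hST : Disjoint S T := by
    simp [S, T, Finset.disjoint_left]
  have hinl : ∀ i, Sum.inl i ∈ S := by simp [S]
  have hinr : ∀ j, Sum.inr j ∈ T := by simp [T]
  exact (h.indepFun_finset₀ S T hST (Sum.forall.2 ⟨hX, hY⟩)).comp
    (φ := fun v i => v ⟨_, hinl i⟩) (ψ := fun v j => v ⟨_, hinr j⟩)
    (by fun_prop) (by fun_prop)

lemma ProbabilityTheory.IndepFun.integral_exp_mul_sq_add_le {S T : Ω → ℝ} (hST : IndepFun S T μ)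
    {k : ℝ} (hk : 0 ≤ k)
    (hSi : Integrable (fun ω => exp (2 * k * S ω ^ 2)) μ)
    (hTi : Integrable (fun ω => exp (2 * k * T ω ^ 2)) μ) :
    ∫ ω, exp (k * (S ω + T ω) ^ 2) ∂μ
      ≤ (∫ ω, exp (2 * k * S ω ^ 2) ∂μ) * ∫ ω, exp (2 * k * T ω ^ 2) ∂μ := by
  have hindep : IndepFun (fun ω => exp (2 * k * S ω ^ 2)) (fun ω => exp (2 * k * T ω ^ 2)) μ :=
    hST.comp (φ := fun x => exp (2 * k * x ^ 2)) (ψ := fun x => exp (2 * k * x ^ 2))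
      (by fun_prop) (by fun_prop)
  rw [← hindep.integral_mul_eq_mul_integral hSi.aestronglyMeasurable hTi.aestronglyMeasurable]
  refine integral_mono_of_nonneg (ae_of_all _ fun _ => (exp_pos _).le)
    (hindep.integrable_mul hSi hTi) (ae_of_all _ fun ω => ?_)
  simp only [Pi.mul_apply, ← exp_add]
  exact exp_le_exp.2 (by nlinarith [sq_nonneg (S ω - T ω)])

lemma hasSubgaussianMGF_sampleMean_sub [IsProbabilityMeasure μ] {ι : Type*} [Fintype ι]
    [Nonempty ι] {W : ι → Ω → ℝ} (hindep : iIndepFun W μ) (hmeas : ∀ i, AEMeasurable (W i) μ)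
    {a b : ℝ} (hbdd : ∀ i, ∀ᵐ ω ∂μ, W i ω ∈ Set.Icc a b) {E : ℝ} (hE : ∀ i, μ[W i] = E) :
    HasSubgaussianMGF (fun ω => 1 / (Fintype.card ι : ℝ) * ∑ i, W i ω - E)
      ((‖b - a‖₊ / 2) ^ 2 / Fintype.card ι) μ := by
  set n : ℝ≥0 := (Fintype.card ι : ℝ≥0)
  have hn : n ≠ 0 := by simp [n]
  have hdev : iIndepFun (fun i ω => W i ω - E) μ :=
    hindep.comp (fun _ x => x - E) fun _ => measurable_sub_const E
  have hsum := (HasSubgaussianMGF.sum_of_iIndepFun hdev (s := Finset.univ) fun i _ =>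
    hE i ▸ hasSubgaussianMGF_of_mem_Icc (hmeas i) (hbdd i)).const_mul (1 / n)
  convert hsum using 1
  · ext ω
    rw [Finset.sum_sub_distrib]
    simp only [Finset.sum_const, Finset.card_univ, nsmul_eq_mul, n]
    push_cast
    field_simp
  · apply NNReal.eq
    change _ = (1 / (n : ℝ)) ^ 2 * ((∑ i : ι, (‖b - a‖₊ / 2) ^ 2 : ℝ≥0) : ℝ)
    simp only [Finset.sum_const, Finset.card_univ, nsmul_eq_mul, n]
    push_cast
    field_simp

section UnitInterval

variable [IsProbabilityMeasure μ] {ι : Type*} [Fintype ι] [Nonempty ι] {W : ι → Ω → ℝ}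
  {E : ℝ}

lemma hasSubgaussianMGF_sampleMean_sub_of_mem_unitInterval (hindep : iIndepFun W μ)
    (hmeas : ∀ i, AEMeasurable (W i) μ) (hbdd : ∀ i, ∀ᵐ ω ∂μ, W i ω ∈ Set.Icc 0 1)
    (hE : ∀ i, μ[W i] = E) :
    HasSubgaussianMGF (fun ω => 1 / (Fintype.card ι : ℝ) * ∑ i, W i ω - E)
      (4 * Fintype.card ι)⁻¹ μ := by
  convert hasSubgaussianMGF_sampleMean_sub hindep hmeas hbdd hE using 1
  apply NNReal.eq
  push_cast
  simp only [sub_zero, norm_one]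
  ring

lemma sampleMean_exponent_bounds (n : ℕ) [NeZero n] :
    0 ≤ 2 * ((n : ℝ) - 1) ∧ 2 * ((4 * n)⁻¹ : ℝ≥0) * (2 * ((n : ℝ) - 1)) < 1 := by
  have hn : (1 : ℝ) ≤ n := by exact_mod_cast NeZero.one_le
  refine ⟨by linarith, ?_⟩
  push_cast
  field_simp
  linarith

lemma integrable_exp_sq_sampleMean_sub (hindep : iIndepFun W μ)
    (hmeas : ∀ i, AEMeasurable (W i) μ) (hbdd : ∀ i, ∀ᵐ ω ∂μ, W i ω ∈ Set.Icc 0 1)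
    (hE : ∀ i, μ[W i] = E) :
    Integrable (fun ω => exp (2 * ((Fintype.card ι : ℝ) - 1) *
      (1 / (Fintype.card ι : ℝ) * ∑ i, W i ω - E) ^ 2)) μ :=
  (hasSubgaussianMGF_sampleMean_sub_of_mem_unitInterval hindep hmeas hbdd hE).integrable_exp_mul_sq
    (sampleMean_exponent_bounds _).1 (sampleMean_exponent_bounds _).2

lemma integral_exp_sq_sampleMean_sub_le_sqrt (hindep : iIndepFun W μ)
    (hmeas : ∀ i, AEMeasurable (W i) μ) (hbdd : ∀ i, ∀ᵐ ω ∂μ, W i ω ∈ Set.Icc 0 1)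
    (hE : ∀ i, μ[W i] = E) :
    ∫ ω, exp (2 * ((Fintype.card ι : ℝ) - 1) *
      (1 / (Fintype.card ι : ℝ) * ∑ i, W i ω - E) ^ 2) ∂μ ≤ √(Fintype.card ι) := by
  refine ((hasSubgaussianMGF_sampleMean_sub_of_mem_unitInterval hindep hmeas hbdd hE
    ).integral_exp_mul_sq_le (sampleMean_exponent_bounds _).1
    (sampleMean_exponent_bounds _).2).trans_eq ?_
  have hn : (0 : ℝ) < Fintype.card ι := by exact_mod_cast Fintype.card_pos
  push_cast
  rw [← sqrt_inv]
  congr 1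
  field_simp
  ring

end UnitInterval

end SampleMean

theorem stmt_18_general {Ω : Type*} [MeasurableSpace Ω] (μ : Measure Ω) [IsProbabilityMeasure μ]
    (m : ℕ) (hm : 1 ≤ m) (X Y : Fin m → Ω → ℝ)
    (hmeasX : ∀ i, Measurable (X i)) (hmeasY : ∀ i, Measurable (Y i))
    (hindep : iIndepFun (Sum.elim X Y) μ)
    (hXbdd : ∀ i ω, X i ω ∈ Set.Icc (0 : ℝ) 1) (hYbdd : ∀ i ω, Y i ω ∈ Set.Icc (0 : ℝ) 1)
    (EX EY : ℝ) (hEX : ∀ i, ∫ ω, X i ω ∂μ = EX) (hEY : ∀ i, ∫ ω, Y i ω ∂μ = EY)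
    (hmeans : EX = EY) :
    (∫ ω, Real.exp (((m : ℝ) - 1) *
        ((1 / (m : ℝ)) * ∑ i : Fin m, (X i ω - Y i ω)) ^ 2) ∂μ)
      ≤ (∫ ω, Real.exp (2 * ((m : ℝ) - 1) *
            ((1 / (m : ℝ)) * (∑ i : Fin m, X i ω) - EX) ^ 2) ∂μ)
        * (∫ ω, Real.exp (2 * ((m : ℝ) - 1) *
            (EY - (1 / (m : ℝ)) * (∑ i : Fin m, Y i ω)) ^ 2) ∂μ) ∧
    (∫ ω, Real.exp (2 * ((m : ℝ) - 1) *
            ((1 / (m : ℝ)) * (∑ i : Fin m, X i ω) - EX) ^ 2) ∂μ)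
        * (∫ ω, Real.exp (2 * ((m : ℝ) - 1) *
            (EY - (1 / (m : ℝ)) * (∑ i : Fin m, Y i ω)) ^ 2) ∂μ)
      ≤ (m : ℝ) ^ 2 := by
  have : NeZero m := ⟨by omega⟩
  have hX : iIndepFun X μ := iIndepFun.precomp (g := Sum.inl) Sum.inl_injective hindep
  have hY : iIndepFun Y μ := iIndepFun.precomp (g := Sum.inr) Sum.inr_injective hindep
  have hXae (i : Fin m) : AEMeasurable (X i) μ := (hmeasX i).aemeasurable
  have hYae (i : Fin m) : AEMeasurable (Y i) μ := (hmeasY i).aemeasurable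
  have hXbdd' (i : Fin m) := ae_of_all μ (hXbdd i)
  have hYbdd' (i : Fin m) := ae_of_all μ (hYbdd i)
  have hintX := integrable_exp_sq_sampleMean_sub hX hXae hXbdd' hEX
  have hintY := integrable_exp_sq_sampleMean_sub hY hYae hYbdd' hEY
  have hboundX := integral_exp_sq_sampleMean_sub_le_sqrt hX hXae hXbdd' hEX
  have hboundY := integral_exp_sq_sampleMean_sub_le_sqrt hY hYae hYbdd' hEY
  simp only [Fintype.card_fin, sub_sq_comm _ EY] at hintX hintY hboundX hboundY
  have hSXY := (hindep.indepFun_sumElim hXae hYae).comp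
    (φ := fun x => 1 / (m : ℝ) * ∑ i, x i - EX) (ψ := fun y => EY - 1 / (m : ℝ) * ∑ i, y i)
    (by fun_prop) (by fun_prop)
  simp only [Function.comp_def] at hSXY
  have hΔ (ω : Ω) : 1 / (m : ℝ) * ∑ i, (X i ω - Y i ω)
      = (1 / (m : ℝ) * ∑ i, X i ω - EX) + (EY - 1 / (m : ℝ) * ∑ i, Y i ω) := by
    rw [Finset.sum_sub_distrib, hmeans]; ring
  refine ⟨?_, ?_⟩
  · simp only [hΔ]
    exact hSXY.integral_exp_mul_sq_add_le (by simpa using hm) hintX hintY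
  · calc _ ≤ √(m : ℝ) * √(m : ℝ) :=
          mul_le_mul hboundX hboundY (integral_nonneg fun _ => (exp_pos _).le) (sqrt_nonneg _)
      _ = m := mul_self_sqrt (Nat.cast_nonneg m)
      _ ≤ (m : ℝ) ^ 2 := by nlinarith [(Nat.one_le_cast (α := ℝ)).2 hm]

/-- Key moment bound in the PAC-Bayes-style proof: for two jointly independent
i.i.d. samples of `[0,1]`-valued variables with the same mean, with
`Δ = (1/m)Σ(Xᵢ−Yᵢ)`, `S_X = (1/m)ΣXᵢ − E[X]`, `S_Y = E[Y] − (1/m)ΣYᵢ`, we have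
`E[exp((m−1)Δ²)] ≤ E[exp(2(m−1)S_X²)]·E[exp(2(m−1)S_Y²)] ≤ m²`. -/
theorem stmt_18 {Ω : Type*} [MeasurableSpace Ω] (μ : Measure Ω) [IsProbabilityMeasure μ]
    (m : ℕ) (hm : 1 ≤ m) (X Y : Fin m → Ω → ℝ)
    (hmeasX : ∀ i, Measurable (X i)) (hmeasY : ∀ i, Measurable (Y i))
    (hindep : iIndepFun (Sum.elim X Y) μ)
    (hXbdd : ∀ i ω, X i ω ∈ Set.Icc (0 : ℝ) 1) (hYbdd : ∀ i ω, Y i ω ∈ Set.Icc (0 : ℝ) 1)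
    (hXid : ∀ i j, IdentDistrib (X i) (X j) μ μ)
    (hYid : ∀ i j, IdentDistrib (Y i) (Y j) μ μ)
    (EX EY : ℝ) (hEX : ∀ i, ∫ ω, X i ω ∂μ = EX) (hEY : ∀ i, ∫ ω, Y i ω ∂μ = EY)
    (hmeans : EX = EY) :
    (∫ ω, Real.exp (((m : ℝ) - 1) *
        ((1 / (m : ℝ)) * ∑ i : Fin m, (X i ω - Y i ω)) ^ 2) ∂μ)
      ≤ (∫ ω, Real.exp (2 * ((m : ℝ) - 1) *
            ((1 / (m : ℝ)) * (∑ i : Fin m, X i ω) - EX) ^ 2) ∂μ)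
        * (∫ ω, Real.exp (2 * ((m : ℝ) - 1) *
            (EY - (1 / (m : ℝ)) * (∑ i : Fin m, Y i ω)) ^ 2) ∂μ) ∧
    (∫ ω, Real.exp (2 * ((m : ℝ) - 1) *
            ((1 / (m : ℝ)) * (∑ i : Fin m, X i ω) - EX) ^ 2) ∂μ)
        * (∫ ω, Real.exp (2 * ((m : ℝ) - 1) *
            (EY - (1 / (m : ℝ)) * (∑ i : Fin m, Y i ω)) ^ 2) ∂μ)
      ≤ (m : ℝ) ^ 2 :=
  stmt_18_general μ m hm X Y hmeasX hmeasY hindep hXbdd hYbdd EX EY hEX hEY hmeans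
end
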